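/- arXiv:2603.07014 — 2 statements merged into one kernel-verified Lean document; each statement's English description precedes it below -/
import Mathlib

section
/- Let Q and Σ be d×d correlation matrices and let λ > 0 be such that Q − λI is positive semidefinite. Then B(Q,Σ) ≤ λ^{−1/2} ‖Q − Σ‖_F. -/
open Matrix Real

/-- The positive semidefinite square root of a positive semidefinite real matrix
(junk value `0` on matrices that are not positive semidefinite). -/
noncomputable def msqrt {d : ℕ} (A : Matrix (Fin d) (Fin d) ℝ) : Matrix (Fin d) (Fin d) ℝ :=
  open scoped Classical in
  if h : A.PosSemidef then
    (h.1.eigenvectorUnitary : Matrix (Fin d) (Fin d) ℝ) *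
      Matrix.diagonal ((↑) ∘ Real.sqrt ∘ h.1.eigenvalues) *
      (star h.1.eigenvectorUnitary : Matrix (Fin d) (Fin d) ℝ)
  else 0

/-- The squared Bures–Wasserstein distance
`B²(S,Q) = tr S + tr Q − 2 tr((S^{1/2} Q S^{1/2})^{1/2})`. -/
noncomputable def sqB {d : ℕ} (S Q : Matrix (Fin d) (Fin d) ℝ) : ℝ :=
  S.trace + Q.trace - 2 * (msqrt (msqrt S * Q * msqrt S)).trace

/-- The Bures–Wasserstein distance `B(S,Q)`. -/
noncomputable def bw {d : ℕ} (S Q : Matrix (Fin d) (Fin d) ℝ) : ℝ :=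
  Real.sqrt (sqB S Q)

/-- The Frobenius (Hilbert–Schmidt) norm of a matrix. -/
noncomputable def frobNorm {d : ℕ} (A : Matrix (Fin d) (Fin d) ℝ) : ℝ :=
  Real.sqrt (∑ i, ∑ j, (A i j) ^ 2)

/-- The spectral (`ℓ²`-operator) norm of a matrix. -/
noncomputable def opNorm {d : ℕ} (A : Matrix (Fin d) (Fin d) ℝ) : ℝ :=
  ‖Matrix.toEuclideanCLM (𝕜 := ℝ) A‖

/-- A correlation matrix: real symmetric positive semidefinite with unit diagonal. -/
def IsCorrMat {d : ℕ} (A : Matrix (Fin d) (Fin d) ℝ) : Prop :=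
  A.PosSemidef ∧ ∀ i, A i i = 1

/-- The 2×2 correlation matrix with off-diagonal entry `ρ`. -/
def corr2 (ρ : ℝ) : Matrix (Fin 2) (Fin 2) ℝ := !![1, ρ; ρ, 1]

/-- The Gaussian optimal transport matrix `T_Σ^Q = Σ^{-1/2} (Σ^{1/2} Q Σ^{1/2})^{1/2} Σ^{-1/2}`. -/
noncomputable def otMap {d : ℕ} (S Q : Matrix (Fin d) (Fin d) ℝ) : Matrix (Fin d) (Fin d) ℝ :=
  (msqrt S)⁻¹ * msqrt (msqrt S * Q * msqrt S) * (msqrt S)⁻¹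

/-- Symmetric normalization `D(Σ)^{-1/2} Σ D(Σ)^{-1/2}` of a matrix by its diagonal. -/
noncomputable def symNormalize {d : ℕ} (S : Matrix (Fin d) (Fin d) ℝ) :
    Matrix (Fin d) (Fin d) ℝ :=
  Matrix.diagonal (fun i => (Real.sqrt (S i i))⁻¹) * S *
    Matrix.diagonal (fun i => (Real.sqrt (S i i))⁻¹)


section Aux

variable {d : ℕ}

noncomputable def Matrix.PosSemidef.sqrt {A : Matrix (Fin d) (Fin d) ℝ} (h : A.PosSemidef) :
    Matrix (Fin d) (Fin d) ℝ :=
  (h.1.eigenvectorUnitary : Matrix (Fin d) (Fin d) ℝ) *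
    Matrix.diagonal ((↑) ∘ Real.sqrt ∘ h.1.eigenvalues) *
    (star h.1.eigenvectorUnitary : Matrix (Fin d) (Fin d) ℝ)

lemma Matrix.PosSemidef.posSemidef_sqrt {A : Matrix (Fin d) (Fin d) ℝ} (h : A.PosSemidef) :
    h.sqrt.PosSemidef := by
  refine Matrix.PosSemidef.mul_mul_conjTranspose_same ?_ _
  refine Matrix.PosSemidef.diagonal fun i => ?_
  exact Real.sqrt_nonneg _

lemma Matrix.PosSemidef.sqrt_mul_self {A : Matrix (Fin d) (Fin d) ℝ} (h : A.PosSemidef) :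
    h.sqrt * h.sqrt = A := by
  set C := (h.1.eigenvectorUnitary : Matrix (Fin d) (Fin d) ℝ) with hC
  have hCC : star C * C = 1 := Unitary.coe_star_mul_self _
  set E := Matrix.diagonal (((↑) ∘ Real.sqrt ∘ h.1.eigenvalues) : Fin d → ℝ) with hE
  have hEE : E * E = Matrix.diagonal (RCLike.ofReal ∘ h.1.eigenvalues) := by
    rw [hE, Matrix.diagonal_mul_diagonal]
    congr 1
    funext v
    simp [Real.mul_self_sqrt (h.eigenvalues_nonneg v)]
  have hs := h.1.spectral_theorem
  rw [Unitary.conjStarAlgAut_apply] at hs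
  have : h.sqrt * h.sqrt = C * (E * E) * star C := by
    rw [Matrix.PosSemidef.sqrt]
    simp only [← hC, ← hE, Matrix.mul_assoc]
    rw [← Matrix.mul_assoc (star C) C, hCC, Matrix.one_mul]
  rw [this, hEE, hC]
  exact hs.symm

lemma msqrt_eq {A : Matrix (Fin d) (Fin d) ℝ} (hA : A.PosSemidef) :
    msqrt A = hA.sqrt := by
  rw [msqrt, dif_pos hA]
  rfl

lemma trace_nonneg_of_psd {A : Matrix (Fin d) (Fin d) ℝ} (hA : A.PosSemidef) :
    0 ≤ A.trace := by
  rw [Matrix.trace]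
  refine Finset.sum_nonneg fun i _ => ?_
  have h := hA.dotProduct_mulVec_nonneg (Pi.single i 1)
  simpa [Matrix.mulVec_single, Matrix.diag] using h

lemma dot_cs (v w : Fin d → ℝ) :
    v ⬝ᵥ w ≤ Real.sqrt (v ⬝ᵥ v) * Real.sqrt (w ⬝ᵥ w) := by
  have h := Real.sum_mul_le_sqrt_mul_sqrt Finset.univ v w
  simpa [dotProduct, pow_two] using h

lemma trace_sqrt_eq {A : Matrix (Fin d) (Fin d) ℝ} (hA : A.PosSemidef) :
    hA.sqrt.trace = ∑ i, Real.sqrt (hA.1.eigenvalues i) := by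
  rw [Matrix.PosSemidef.sqrt, Matrix.trace_mul_comm, ← Matrix.mul_assoc,
    Unitary.coe_star_mul_self, Matrix.one_mul, Matrix.trace_diagonal]
  simp [Function.comp]

lemma basis_dot_self {A : Matrix (Fin d) (Fin d) ℝ} (hA : A.IsHermitian) (i : Fin d) :
    (⇑(hA.eigenvectorBasis i) : Fin d → ℝ) ⬝ᵥ ⇑(hA.eigenvectorBasis i) = 1 := by
  have h1 : ‖hA.eigenvectorBasis i‖ = 1 := hA.eigenvectorBasis.orthonormal.1 i
  have h2 := EuclideanSpace.norm_eq (hA.eigenvectorBasis i)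
  rw [h1] at h2
  have h3 : ∑ j, ‖hA.eigenvectorBasis i j‖ ^ 2 = 1 := Real.sqrt_eq_one.mp h2.symm
  simpa [dotProduct, Real.norm_eq_abs, sq_abs, pow_two] using h3

lemma eigenvalues_ge {A : Matrix (Fin d) (Fin d) ℝ} (hA : A.IsHermitian) {c : ℝ}
    (h : (A - c • (1 : Matrix (Fin d) (Fin d) ℝ)).PosSemidef) (i : Fin d) :
    c ≤ hA.eigenvalues i := by
  have hv := hA.mulVec_eigenvectorBasis i
  have h2 := h.dotProduct_mulVec_nonneg ⇑(hA.eigenvectorBasis i)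
  rw [Matrix.sub_mulVec, hv, Matrix.smul_mulVec, Matrix.one_mulVec] at h2
  have h3 := basis_dot_self hA i
  simp only [star_trivial, dotProduct_sub, dotProduct_smul, smul_eq_mul,
    h3, mul_one] at h2
  linarith

lemma sqrt_lower {A : Matrix (Fin d) (Fin d) ℝ} (hA : A.PosSemidef) {c : ℝ}
    (h : (A - c • (1 : Matrix (Fin d) (Fin d) ℝ)).PosSemidef) :
    (hA.sqrt - Real.sqrt c • (1 : Matrix (Fin d) (Fin d) ℝ)).PosSemidef := by
  have hU : (hA.1.eigenvectorUnitary : Matrix (Fin d) (Fin d) ℝ) *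
      star (hA.1.eigenvectorUnitary : Matrix (Fin d) (Fin d) ℝ) = 1 :=
    Unitary.coe_mul_star_self _
  have key : hA.sqrt - Real.sqrt c • (1 : Matrix (Fin d) (Fin d) ℝ) =
      (hA.1.eigenvectorUnitary : Matrix (Fin d) (Fin d) ℝ) *
        Matrix.diagonal (fun i => Real.sqrt (hA.1.eigenvalues i) - Real.sqrt c) *
        star (hA.1.eigenvectorUnitary : Matrix (Fin d) (Fin d) ℝ) := by
    have hdiag : Matrix.diagonal (fun i => Real.sqrt (hA.1.eigenvalues i) - Real.sqrt c) =
        Matrix.diagonal ((↑) ∘ Real.sqrt ∘ hA.1.eigenvalues) -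
          Real.sqrt c • (1 : Matrix (Fin d) (Fin d) ℝ) := by
      rw [Matrix.smul_one_eq_diagonal, ← Matrix.diagonal_sub]
      rfl
    rw [hdiag, Matrix.mul_sub, Matrix.sub_mul, Matrix.mul_smul, Matrix.mul_one,
      Matrix.smul_mul, hU, Matrix.PosSemidef.sqrt]
  rw [key]
  refine Matrix.PosSemidef.mul_mul_conjTranspose_same ?_ _
  refine Matrix.PosSemidef.diagonal fun i => ?_
  exact sub_nonneg.2 (Real.sqrt_le_sqrt (eigenvalues_ge hA.1 h i))

lemma trace_le_trace_sqrt (X : Matrix (Fin d) (Fin d) ℝ) :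
    X.trace ≤ (Matrix.posSemidef_conjTranspose_mul_self X).sqrt.trace := by
  set hM := Matrix.posSemidef_conjTranspose_mul_self X with hMdef
  set U : Matrix (Fin d) (Fin d) ℝ := (hM.1.eigenvectorUnitary : Matrix (Fin d) (Fin d) ℝ)
    with hUdef
  have hUU : star U * U = 1 := Unitary.coe_star_mul_self _
  have hUU' : U * star U = 1 := Unitary.coe_mul_star_self _
  have htr : X.trace = (star U * X * U).trace := by
    rw [Matrix.trace_mul_comm, ← Matrix.mul_assoc, hUU', Matrix.one_mul]
  rw [htr, trace_sqrt_eq, Matrix.trace]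
  refine Finset.sum_le_sum fun i _ => ?_
  set v : Fin d → ℝ := ⇑(hM.1.eigenvectorBasis i) with hvdef
  have hvv : v ⬝ᵥ v = 1 := basis_dot_self hM.1 i
  have hMv : (Xᴴ * X) *ᵥ v = hM.1.eigenvalues i • v := hM.1.mulVec_eigenvectorBasis i
  have hXvXv : (X *ᵥ v) ⬝ᵥ (X *ᵥ v) = hM.1.eigenvalues i := by
    have : (X *ᵥ v) ⬝ᵥ (X *ᵥ v) = v ⬝ᵥ ((Xᴴ * X) *ᵥ v) := by
      rw [← Matrix.mulVec_mulVec, dotProduct_mulVec v, Matrix.conjTranspose_eq_transpose_of_trivial,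
        Matrix.vecMul_transpose]
    rw [this, hMv, dotProduct_smul, smul_eq_mul, hvv, mul_one]
  have hdiag : (star U * X * U) i i = v ⬝ᵥ (X *ᵥ v) := by
    simp only [Matrix.mul_apply, Matrix.mulVec, dotProduct, Matrix.star_apply,
      star_trivial, Finset.sum_mul, Finset.mul_sum]
    rw [Finset.sum_comm]
    refine Finset.sum_congr rfl fun j _ => Finset.sum_congr rfl fun k _ => ?_
    have hUv : ∀ m, U m i = v m := fun m => Matrix.IsHermitian.eigenvectorUnitary_apply hM.1 m i
    rw [hUv, hUv]
    ring
  rw [Matrix.diag_apply, hdiag]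
  calc v ⬝ᵥ (X *ᵥ v) ≤ Real.sqrt (v ⬝ᵥ v) * Real.sqrt ((X *ᵥ v) ⬝ᵥ (X *ᵥ v)) := dot_cs _ _
    _ = Real.sqrt (hM.1.eigenvalues i) := by rw [hvv, hXvXv, Real.sqrt_one, one_mul]

lemma trace_mul_eq_sum (D E : Matrix (Fin d) (Fin d) ℝ) :
    (D * E).trace = ∑ i, ∑ j, D i j * E j i := by
  simp [Matrix.trace, Matrix.diag, Matrix.mul_apply]

lemma trace_mul_le_frob (D E : Matrix (Fin d) (Fin d) ℝ) (hD : Dᵀ = D) :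
    (D * E).trace ≤ Real.sqrt ((D * D).trace) * Real.sqrt (∑ i, ∑ j, (E i j) ^ 2) := by
  have hcs := Real.sum_mul_le_sqrt_mul_sqrt (Finset.univ : Finset (Fin d × Fin d))
    (fun p => D p.1 p.2) (fun p => E p.2 p.1)
  have h1 : (D * E).trace = ∑ p : Fin d × Fin d, D p.1 p.2 * E p.2 p.1 := by
    rw [trace_mul_eq_sum, Fintype.sum_prod_type]
  have h2 : (D * D).trace = ∑ p : Fin d × Fin d, (D p.1 p.2) ^ 2 := by
    rw [trace_mul_eq_sum, Fintype.sum_prod_type]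
    refine Finset.sum_congr rfl fun i _ => Finset.sum_congr rfl fun j _ => ?_
    have hji : D j i = D i j := by rw [← Matrix.transpose_apply D i j, hD]
    rw [hji, pow_two]
  have h3 : (∑ p : Fin d × Fin d, (E p.2 p.1) ^ 2) = ∑ i, ∑ j, (E i j) ^ 2 := by
    rw [Fintype.sum_prod_type]
    exact Finset.sum_comm
  rw [h1, h2, ← h3]
  exact hcs

lemma conj_sub_smul (D A : Matrix (Fin d) (Fin d) ℝ) (c : ℝ) :
    D * (A - c • (1 : Matrix (Fin d) (Fin d) ℝ)) * D = D * (A * D) - c • (D * D) := by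
  rw [Matrix.mul_sub, Matrix.mul_smul, Matrix.mul_one, Matrix.sub_mul, Matrix.smul_mul,
    Matrix.mul_assoc]

end Aux

/-- Let `Q, Σ` be `d×d` correlation matrices, and `λ > 0` with `Q − λ I`
positive semidefinite.  Then `B(Q,Σ) ≤ λ^{−1/2} ‖Q − Σ‖_F`. -/
theorem bw_le_frobNorm_of_eigen_lowerBound {d : ℕ} (Q S : Matrix (Fin d) (Fin d) ℝ)
    (hQ : IsCorrMat Q) (hS : IsCorrMat S)
    (lam : ℝ) (hlam : 0 < lam)
    (hQlb : (Q - lam • (1 : Matrix (Fin d) (Fin d) ℝ)).PosSemidef) :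
    bw Q S ≤ lam ^ (-(1 : ℝ) / 2) * frobNorm (Q - S) := by
  obtain ⟨hQps, -⟩ := hQ
  obtain ⟨hSps, -⟩ := hS
  set A := hQps.sqrt with hAdef
  set B := hSps.sqrt with hBdef
  have hAe : msqrt Q = A := msqrt_eq hQps
  have hBe : msqrt S = B := msqrt_eq hSps
  have hApsd : A.PosSemidef := hQps.posSemidef_sqrt
  have hBpsd : B.PosSemidef := hSps.posSemidef_sqrt
  have hAA : A * A = Q := hQps.sqrt_mul_self
  have hBB : B * B = S := hSps.sqrt_mul_self
  have hAsym : Aᴴ = A := hApsd.1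
  have hBsym : Bᴴ = B := hBpsd.1
  set D := A - B with hDdef
  have hDsym : Dᴴ = D := by rw [hDdef, Matrix.conjTranspose_sub, hAsym, hBsym]
  have hDT : Dᵀ = D := by rw [← Matrix.conjTranspose_eq_transpose_of_trivial]; exact hDsym
  set F := Real.sqrt (∑ i, ∑ j, ((Q - S) i j) ^ 2) with hFdef
  have hFnn : 0 ≤ F := Real.sqrt_nonneg _
  -- step 1 : sqB Q S ≤ trace (D * D)
  have hXX : (B * A)ᴴ * (B * A) = A * S * A := by
    rw [Matrix.conjTranspose_mul, hAsym, hBsym, Matrix.mul_assoc,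
      ← Matrix.mul_assoc B B A, hBB, ← Matrix.mul_assoc]
  have h1 : (B * A).trace ≤ (msqrt (A * S * A)).trace := by
    have h := trace_le_trace_sqrt (B * A)
    rwa [← msqrt_eq, hXX] at h
  have hDD : (D * D).trace = Q.trace + S.trace - 2 * (B * A).trace := by
    rw [hDdef, Matrix.sub_mul, Matrix.mul_sub, Matrix.mul_sub, Matrix.trace_sub,
      Matrix.trace_sub, Matrix.trace_sub, hAA, hBB, Matrix.trace_mul_comm A B]
    ring
  have hsqB : sqB Q S ≤ (D * D).trace := by
    rw [sqB, hAe, hDD]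
    linarith
  -- step 2 : √lam * trace (D*D) ≤ trace (D * (Q - S))
  have hsl : (A - Real.sqrt lam • (1 : Matrix (Fin d) (Fin d) ℝ)).PosSemidef :=
    sqrt_lower hQps hQlb
  have hQS : A * D + D * B = Q - S := by
    rw [hDdef, Matrix.mul_sub, Matrix.sub_mul, hAA, hBB]
    abel
  have htr1 : Real.sqrt lam * (D * D).trace ≤ (D * (A * D)).trace := by
    have hps : (D * (A - Real.sqrt lam • (1 : Matrix (Fin d) (Fin d) ℝ)) * Dᴴ).PosSemidef :=
      hsl.mul_mul_conjTranspose_same D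
    rw [hDsym] at hps
    have h0 := trace_nonneg_of_psd hps
    have hexp := conj_sub_smul D A (Real.sqrt lam)
    rw [hexp, Matrix.trace_sub, Matrix.trace_smul, smul_eq_mul] at h0
    linarith
  have htr2 : 0 ≤ (D * (D * B)).trace := by
    have hps : (D * B * Dᴴ).PosSemidef := hBpsd.mul_mul_conjTranspose_same D
    rw [hDsym] at hps
    have h0 := trace_nonneg_of_psd hps
    rw [Matrix.trace_mul_comm D (D * B)]
    exact trace_nonneg_of_psd hps
  have hkey : Real.sqrt lam * (D * D).trace ≤ (D * (Q - S)).trace := by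
    rw [← hQS, Matrix.mul_add, Matrix.trace_add]
    linarith
  have hcs : (D * (Q - S)).trace ≤ Real.sqrt ((D * D).trace) * F :=
    trace_mul_le_frob D (Q - S) hDT
  have htD : 0 ≤ (D * D).trace := by
    have hps : (D * Dᴴ).PosSemidef := Matrix.posSemidef_self_mul_conjTranspose D
    rw [hDsym] at hps
    exact trace_nonneg_of_psd hps
  -- combine : trace (D*D) ≤ lam⁻¹ * F ^ 2
  have hquad : (D * D).trace ≤ lam⁻¹ * F ^ 2 := by
    set t := (D * D).trace with htdef
    rcases eq_or_lt_of_le htD with h0 | h0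
    · rw [← h0]
      positivity
    · have hst : 0 < Real.sqrt t := Real.sqrt_pos.2 h0
      have h4 : Real.sqrt lam * t ≤ Real.sqrt t * F := le_trans hkey hcs
      have ht : Real.sqrt t * Real.sqrt t = t := Real.mul_self_sqrt htD
      have h4' : (Real.sqrt lam * Real.sqrt t) * Real.sqrt t ≤ F * Real.sqrt t := by
        rw [mul_assoc, ht, mul_comm F]
        exact h4
      have h6 : Real.sqrt lam * Real.sqrt t ≤ F := le_of_mul_le_mul_right h4' hst
      have h7 : lam * t ≤ F ^ 2 := by
        have h8 : (Real.sqrt lam * Real.sqrt t) * (Real.sqrt lam * Real.sqrt t) ≤ F * F :=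
          mul_self_le_mul_self (by positivity) h6
        have h9 : (Real.sqrt lam * Real.sqrt t) * (Real.sqrt lam * Real.sqrt t) = lam * t := by
          rw [show (Real.sqrt lam * Real.sqrt t) * (Real.sqrt lam * Real.sqrt t) =
            (Real.sqrt lam * Real.sqrt lam) * (Real.sqrt t * Real.sqrt t) by ring,
            Real.mul_self_sqrt hlam.le, ht]
        rw [h9, ← pow_two] at h8
        exact h8
      rw [le_inv_mul_iff₀ hlam]
      exact h7
  -- finish
  have hfinal : sqB Q S ≤ lam⁻¹ * F ^ 2 := le_trans hsqB hquad
  have hbw : bw Q S ≤ Real.sqrt (lam⁻¹ * F ^ 2) := Real.sqrt_le_sqrt hfinal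
  have hrhs : Real.sqrt (lam⁻¹ * F ^ 2) = lam ^ (-(1 : ℝ) / 2) * frobNorm (Q - S) := by
    have hF : frobNorm (Q - S) = F := rfl
    have hpow : lam ^ (-(1 : ℝ) / 2) = Real.sqrt lam⁻¹ := by
      rw [Real.sqrt_inv, Real.sqrt_eq_rpow, ← Real.rpow_neg hlam.le]
      norm_num
    rw [Real.sqrt_mul (inv_nonneg.2 hlam.le), Real.sqrt_sq hFnn, hpow, hF]
  rw [← hrhs]
  exact hbw
end

section
/- Let n ≥ 1, let s_1,…,s_n ∈ ℝ be weights, and let ρ̂_1,…,ρ̂_n ∈ (−1,1). Set A = (1/n)Σ_{i=1}^n s_i √(1+ρ̂_i) and D = (1/n)Σ_{i=1}^n s_i √(1−ρ̂_i), and assume A > 0 and D > 0. Define F(ρ) = (1/n)Σ_{i=1}^n s_i B²(Σ(ρ̂_i), Σ(ρ)) for ρ ∈ [−1,1]. Then ρ* := (A² − D²)/(A² + D²) lies in (−1,1) and is the unique minimizer of F on [−1,1]: for every ρ ∈ [−1,1] with ρ ≠ ρ*, F(ρ*) < F(ρ). -/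
open Matrix Real

section Aux

lemma psd2 (u v : ℝ) (h1 : 0 ≤ u + v) (h2 : 0 ≤ u - v) : (!![u, v; v, u]).PosSemidef := by
  rw [Matrix.posSemidef_iff_dotProduct_mulVec]
  constructor
  · ext i j
    fin_cases i <;> fin_cases j <;>
      simp [Matrix.conjTranspose, Matrix.vecHead, Matrix.vecTail]
  · intro x
    have e : star x ⬝ᵥ (!![u, v; v, u] *ᵥ x) =
        (u+v)/2 * (x 0 + x 1)^2 + (u-v)/2 * (x 0 - x 1)^2 := by
      simp [dotProduct, Matrix.mulVec, Fin.sum_univ_two]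
      ring
    rw [e]
    positivity

lemma msqrt_eq_s9 {d : ℕ} {A B : Matrix (Fin d) (Fin d) ℝ} (hB : B.PosSemidef)
    (h : B * B = A) : msqrt A = B := by
  have hA : A.PosSemidef := by rw [← h, ← sq]; exact hB.pow 2
  rw [msqrt, dif_pos hA]
  open scoped MatrixOrder in
  have e1 : CFC.sqrt A = B := CFC.sqrt_unique h hB.nonneg
  open scoped MatrixOrder in
  rw [← e1, CFC.sqrt_eq_real_sqrt A hA.nonneg, cfcₙ_eq_cfc, hA.1.cfc_eq, IsHermitian.cfc,
    Unitary.conjStarAlgAut_apply]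
  rfl

lemma msqrt_symm2 (p q : ℝ) (h1 : 0 ≤ p + q) (h2 : 0 ≤ p - q) :
    msqrt !![p, q; q, p] =
      !![(Real.sqrt (p+q) + Real.sqrt (p-q))/2, (Real.sqrt (p+q) - Real.sqrt (p-q))/2;
         (Real.sqrt (p+q) - Real.sqrt (p-q))/2, (Real.sqrt (p+q) + Real.sqrt (p-q))/2] := by
  have hx : Real.sqrt (p+q) ^ 2 = p + q := Real.sq_sqrt h1
  have hy : Real.sqrt (p-q) ^ 2 = p - q := Real.sq_sqrt h2
  apply msqrt_eq_s9
  · apply psd2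
    · have := Real.sqrt_nonneg (p+q); linarith
    · have := Real.sqrt_nonneg (p-q); linarith
  · rw [Matrix.mul_fin_two]
    ext i j
    fin_cases i <;> fin_cases j <;> simp <;>
      [linear_combination hx/2 + hy/2; linear_combination hx/2 - hy/2;
       linear_combination hx/2 - hy/2; linear_combination hx/2 + hy/2]

lemma sqB_corr2 (a b : ℝ) (ha1 : -1 ≤ a) (ha2 : a ≤ 1) (hb1 : -1 ≤ b) (hb2 : b ≤ 1) :
    sqB (corr2 a) (corr2 b) =
      4 - 2 * (Real.sqrt (1+a) * Real.sqrt (1+b) + Real.sqrt (1-a) * Real.sqrt (1-b)) := by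
  have hx : Real.sqrt (1+a) ^ 2 = 1 + a := Real.sq_sqrt (by linarith)
  have hy : Real.sqrt (1-a) ^ 2 = 1 - a := Real.sq_sqrt (by linarith)
  have hSa : msqrt (corr2 a) =
      !![(Real.sqrt (1+a) + Real.sqrt (1-a))/2, (Real.sqrt (1+a) - Real.sqrt (1-a))/2;
         (Real.sqrt (1+a) - Real.sqrt (1-a))/2, (Real.sqrt (1+a) + Real.sqrt (1-a))/2] := by
    have := msqrt_symm2 1 a (by linarith) (by linarith)
    simpa [corr2] using this
  have key : msqrt (corr2 a) * corr2 b * msqrt (corr2 a) =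
      !![1 + a*b, a + b; a + b, 1 + a*b] := by
    rw [hSa, corr2]
    ext i j
    fin_cases i <;> fin_cases j <;>
      simp [Matrix.mul_apply, Fin.sum_univ_two] <;>
      [linear_combination ((1+b)/2) * hx + ((1-b)/2) * hy;
       linear_combination ((1+b)/2) * hx - ((1-b)/2) * hy;
       linear_combination ((1+b)/2) * hx - ((1-b)/2) * hy;
       linear_combination ((1+b)/2) * hx + ((1-b)/2) * hy]
  have e1 : (1 + a*b) + (a + b) = (1+a) * (1+b) := by ring
  have e2 : (1 + a*b) - (a + b) = (1-a) * (1-b) := by ring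
  rw [sqB, key, msqrt_symm2 (1 + a*b) (a + b) (by nlinarith) (by nlinarith), e1, e2,
    Real.sqrt_mul (by linarith), Real.sqrt_mul (by linarith)]
  simp [corr2, Matrix.trace_fin_two]
  ring

lemma scalar_ineq (A D : ℝ) (hA : 0 < A) (hD : 0 < D) (ρ : ℝ) (h1 : -1 ≤ ρ) (h2 : ρ ≤ 1)
    (hne : ρ ≠ (A^2 - D^2)/(A^2 + D^2)) :
    A * Real.sqrt (1+ρ) + D * Real.sqrt (1-ρ) <
    A * Real.sqrt (1 + (A^2-D^2)/(A^2+D^2)) + D * Real.sqrt (1 - (A^2-D^2)/(A^2+D^2)) := by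
  have hS : (0:ℝ) < A^2 + D^2 := by positivity
  set x := Real.sqrt (1+ρ) with hxdef
  set y := Real.sqrt (1-ρ) with hydef
  have hx : x^2 = 1+ρ := Real.sq_sqrt (by linarith)
  have hy : y^2 = 1-ρ := Real.sq_sqrt (by linarith)
  have hxn : 0 ≤ x := Real.sqrt_nonneg _
  have hyn : 0 ≤ y := Real.sqrt_nonneg _
  have e1 : 1 + (A^2-D^2)/(A^2+D^2) = 2*A^2/(A^2+D^2) := by field_simp; ring
  have e2 : 1 - (A^2-D^2)/(A^2+D^2) = 2*D^2/(A^2+D^2) := by field_simp; ring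
  have r1 : Real.sqrt (2*A^2/(A^2+D^2)) = Real.sqrt 2 * A / Real.sqrt (A^2+D^2) := by
    rw [Real.sqrt_div (by positivity), Real.sqrt_mul (by norm_num), Real.sqrt_sq hA.le]
  have r2 : Real.sqrt (2*D^2/(A^2+D^2)) = Real.sqrt 2 * D / Real.sqrt (A^2+D^2) := by
    rw [Real.sqrt_div (by positivity), Real.sqrt_mul (by norm_num), Real.sqrt_sq hD.le]
  have hsS : Real.sqrt (A^2+D^2) ^ 2 = A^2+D^2 := Real.sq_sqrt hS.le
  have hsSpos : 0 < Real.sqrt (A^2+D^2) := Real.sqrt_pos.mpr hS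
  have hRHS : A * Real.sqrt (1 + (A^2-D^2)/(A^2+D^2)) + D * Real.sqrt (1 - (A^2-D^2)/(A^2+D^2))
      = Real.sqrt 2 * Real.sqrt (A^2+D^2) := by
    rw [e1, e2, r1, r2,
      show A * (Real.sqrt 2 * A / Real.sqrt (A^2+D^2)) + D * (Real.sqrt 2 * D / Real.sqrt (A^2+D^2))
        = Real.sqrt 2 * ((A^2+D^2) / Real.sqrt (A^2+D^2)) from by ring,
      Real.div_sqrt]
  rw [hRHS]
  have hneq : A*y - D*x ≠ 0 := by
    intro h
    apply hne
    have hsq2 : (A*y)^2 = (D*x)^2 := by rw [show A*y = D*x by linarith]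
    have h' : A^2 * (1-ρ) = D^2 * (1+ρ) := by
      linear_combination hsq2 - A^2*hy + D^2*hx
    rw [eq_div_iff hS.ne']
    linear_combination -h'
  have hsq : (A*x + D*y)^2 = 2*(A^2+D^2) - (A*y - D*x)^2 := by
    linear_combination (A^2 + D^2) * hx + (A^2 + D^2) * hy
  have hlt : (A*x + D*y)^2 < (Real.sqrt 2 * Real.sqrt (A^2+D^2))^2 := by
    have h2s : Real.sqrt 2 ^ 2 = 2 := Real.sq_sqrt (by norm_num)
    have he : (Real.sqrt 2 * Real.sqrt (A^2+D^2))^2 = 2*(A^2+D^2) := by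
      rw [mul_pow, h2s, hsS]
    rw [he, hsq]
    have : 0 < (A*y - D*x)^2 := by positivity
    linarith
  have hr : 0 ≤ Real.sqrt 2 * Real.sqrt (A^2+D^2) := by positivity
  exact lt_of_pow_lt_pow_left₀ 2 hr hlt

end Aux

/-- Let `s_1,…,s_n` be weights and `ρ̂_1,…,ρ̂_n ∈ (−1,1)`.  Set
`A = (1/n) Σ s_i √(1+ρ̂_i)` and `D = (1/n) Σ s_i √(1−ρ̂_i)` and assume `A, D > 0`.  Let
`F(ρ) = (1/n) Σ s_i B²(Σ(ρ̂_i), Σ(ρ))`.  Then `ρ* = (A²−D²)/(A²+D²)` lies in `(−1,1)` and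
is the unique minimizer of `F` on `[−1,1]`. -/
theorem bivariate_frechet_unique_minimizer
    (n : ℕ) (hn : 1 ≤ n) (s : Fin n → ℝ) (ρh : Fin n → ℝ)
    (hρh : ∀ i, ρh i ∈ Set.Ioo (-1 : ℝ) 1)
    (A D : ℝ)
    (hA : A = (1 / (n : ℝ)) * ∑ i, s i * Real.sqrt (1 + ρh i))
    (hD : D = (1 / (n : ℝ)) * ∑ i, s i * Real.sqrt (1 - ρh i))
    (hApos : 0 < A) (hDpos : 0 < D) :
    (A ^ 2 - D ^ 2) / (A ^ 2 + D ^ 2) ∈ Set.Ioo (-1 : ℝ) 1 ∧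
    ∀ ρ ∈ Set.Icc (-1 : ℝ) 1, ρ ≠ (A ^ 2 - D ^ 2) / (A ^ 2 + D ^ 2) →
      (1 / (n : ℝ)) * ∑ i, s i * sqB (corr2 (ρh i)) (corr2 ((A ^ 2 - D ^ 2) / (A ^ 2 + D ^ 2)))
        < (1 / (n : ℝ)) * ∑ i, s i * sqB (corr2 (ρh i)) (corr2 ρ) := by
  have hS : (0:ℝ) < A ^ 2 + D ^ 2 := by positivity
  have hρstar : (A ^ 2 - D ^ 2) / (A ^ 2 + D ^ 2) ∈ Set.Ioo (-1 : ℝ) 1 := by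
    constructor
    · rw [lt_div_iff₀ hS]; nlinarith
    · rw [div_lt_iff₀ hS]; nlinarith
  refine ⟨hρstar, ?_⟩
  intro ρ hρ hne
  have hnpos : (0:ℝ) < n := by exact_mod_cast hn
  have sumeq : ∀ ρ' : ℝ, -1 ≤ ρ' → ρ' ≤ 1 →
      (1 / (n : ℝ)) * ∑ i, s i * sqB (corr2 (ρh i)) (corr2 ρ')
        = (1 / (n : ℝ)) * (∑ i, 4 * s i)
          - 2 * (A * Real.sqrt (1 + ρ') + D * Real.sqrt (1 - ρ')) := by
    intro ρ' h1' h2'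
    have hterm : ∀ i : Fin n, s i * sqB (corr2 (ρh i)) (corr2 ρ')
        = 4 * s i - 2 * Real.sqrt (1 + ρ') * (s i * Real.sqrt (1 + ρh i))
          - 2 * Real.sqrt (1 - ρ') * (s i * Real.sqrt (1 - ρh i)) := by
      intro i
      rw [sqB_corr2 (ρh i) ρ' (hρh i).1.le (hρh i).2.le h1' h2']
      ring
    rw [Finset.sum_congr rfl (fun i _ => hterm i), Finset.sum_sub_distrib,
      Finset.sum_sub_distrib, ← Finset.mul_sum, ← Finset.mul_sum, ← Finset.mul_sum, hA, hD]
    ring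
  have h1 : -1 ≤ ρ := hρ.1
  have h2 : ρ ≤ 1 := hρ.2
  rw [sumeq ρ h1 h2, sumeq ((A ^ 2 - D ^ 2) / (A ^ 2 + D ^ 2)) hρstar.1.le hρstar.2.le]
  have := scalar_ineq A D hApos hDpos ρ h1 h2 hne
  linarith
end
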